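/- arXiv:2510.26079 — 2 statements merged into one kernel-verified Lean document; each statement's English description precedes it below -/
import Mathlib

section
/- For all integers m and e, the tetrahedral index satisfies the symmetry I_Δ(m,e) = I_Δ(-e,-m). -/
open scoped BigOperators

/-- Finite q-Pochhammer symbol `(a;q)_n = ∏_{i=0}^{n-1} (1 - a q^i)`. -/
noncomputable def qPoch (a q : ℂ) (n : ℕ) : ℂ :=
  ∏ i ∈ Finset.range n, (1 - a * q ^ i)

/-- Infinite q-Pochhammer symbol `(a;q)_∞ = ∏_{i=0}^{∞} (1 - a q^i)`. -/
noncomputable def qPochInf (a q : ℂ) : ℂ :=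
  ∏' i : ℕ, (1 - a * q ^ i)

/-- The `n`-th term of the series defining the tetrahedral index `I_Δ(m,e)`,
with `q = u^2` and vanishing below `e₊ = max(-e,0)`. -/
noncomputable def tetTerm (u : ℂ) (m e : ℤ) (n : ℕ) : ℂ :=
  if (-e).toNat ≤ n then
    (-1 : ℂ) ^ n * u ^ ((n : ℤ) * ((n : ℤ) + 1) - (2 * (n : ℤ) + e) * m) /
      (qPoch (u ^ 2) (u ^ 2) n * qPoch (u ^ 2) (u ^ 2) ((n : ℤ) + e).toNat)
  else 0

/-- The tetrahedral index `I_Δ(m,e) = Σ_{n=e₊}^∞ (-1)^n u^{n(n+1)-(2n+e)m}/((q;q)_n (q;q)_{n+e})`. -/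
noncomputable def tetIndex (u : ℂ) (m e : ℤ) : ℂ := ∑' n : ℕ, tetTerm u m e n

/-! With `q = u²`, let `E(z) = Σₙ (-1)ⁿ q^(n choose 2) zⁿ / (q;q)ₙ` be Euler's series for `(z;q)_∞`.
Its functional equation `E(z) = (1 - z) E(qz)` gives `E(q) = (q;q)_N E(q^(N+1))` and `E(q^j) = 0`
for `j ≤ 0`. Hence multiplying the series for `I_Δ(m,e)` by `E(q)` and expanding
`E(q^(n+e+1))` turns it into
`u^(-em) Σ_{n,k} (-1)^(n+k) q^(C(n,2) + C(k,2) + nk) q^((1-m)n) q^((1+e)k) / ((q;q)ₙ (q;q)ₖ)`,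
an absolutely convergent double series that is symmetric under `(m,e) ↦ (-e,-m)`, `n ↔ k`.
Finally `E(q) ≠ 0`, since `E(q^(N+1)) → E(0) = 1`. -/

open Filter Topology

lemma qPoch_succ (a q : ℂ) (n : ℕ) : qPoch a q (n + 1) = qPoch a q n * (1 - a * q ^ n) :=
  Finset.prod_range_succ _ n

lemma Nat.two_mul_choose_two_eq (n : ℕ) : (2 * n.choose 2 : ℤ) = n * (n - 1) := by
  rcases n with _ | n
  · simp
  · have h := Nat.add_one_mul_choose_eq n 1
    rw [Nat.choose_one_right] at h
    have h' : ((n + 1 : ℕ) : ℤ) * n = ((n + 1).choose 2 : ℕ) * 2 := by exact_mod_cast h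
    push_cast at h' ⊢
    linear_combination -h'

section Euler

variable {q : ℂ}

lemma one_sub_mul_pow_ne_zero (hq : ‖q‖ < 1) (n : ℕ) : 1 - q * q ^ n ≠ 0 := by
  refine sub_ne_zero.2 fun h => ?_
  have : ‖q * q ^ n‖ < 1 := by
    rw [← pow_succ', norm_pow]
    exact pow_lt_one₀ (norm_nonneg q) hq n.succ_ne_zero
  simp [← h] at this

lemma qPoch_self_ne_zero (hq : ‖q‖ < 1) (n : ℕ) : qPoch q q n ≠ 0 :=
  Finset.prod_ne_zero_iff.2 fun i _ => one_sub_mul_pow_ne_zero hq i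

noncomputable def eulerCoeff (q : ℂ) (n : ℕ) : ℂ :=
  (-1) ^ n * q ^ n.choose 2 / qPoch q q n

noncomputable def eulerSeries (q z : ℂ) : ℂ :=
  ∑' n, eulerCoeff q n * z ^ n

lemma eulerCoeff_zero : eulerCoeff q 0 = 1 := by
  simp [eulerCoeff, qPoch]

lemma eulerCoeff_succ (n : ℕ) :
    eulerCoeff q (n + 1) = -(q ^ n / (1 - q * q ^ n)) * eulerCoeff q n := by
  rw [eulerCoeff, eulerCoeff, qPoch_succ, Nat.choose_succ_succ', Nat.choose_one_right,
    div_eq_mul_inv, div_eq_mul_inv, div_eq_mul_inv, mul_inv]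
  ring

lemma summable_norm_eulerCoeff_mul_pow (hq : ‖q‖ < 1) (z : ℂ) :
    Summable fun n => ‖eulerCoeff q n * z ^ n‖ := by
  have hratio : Tendsto (fun n : ℕ => q ^ n * z / (1 - q * q ^ n)) atTop (𝓝 0) := by
    have hpow := tendsto_pow_atTop_nhds_zero_of_norm_lt_one hq
    have h := (hpow.mul_const z).div ((tendsto_const_nhds (x := (1 : ℂ))).sub (hpow.const_mul q))
      (by simp)
    rwa [zero_mul, mul_zero, sub_zero, div_one] at h
  refine summable_of_ratio_norm_eventually_le (r := 1 / 2) (by norm_num) ?_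
  filter_upwards [hratio.norm.eventually (ge_mem_nhds (by norm_num : ‖(0 : ℂ)‖ < 1 / 2))]
    with n hn
  rw [norm_norm, norm_norm, eulerCoeff_succ, pow_succ]
  calc ‖-(q ^ n / (1 - q * q ^ n)) * eulerCoeff q n * (z ^ n * z)‖
      = ‖q ^ n * z / (1 - q * q ^ n)‖ * ‖eulerCoeff q n * z ^ n‖ := by
        rw [← norm_mul, ← norm_neg]; congr 1; ring
    _ ≤ 1 / 2 * ‖eulerCoeff q n * z ^ n‖ := by gcongr

lemma summable_eulerCoeff_mul_pow (hq : ‖q‖ < 1) (z : ℂ) :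
    Summable fun n => eulerCoeff q n * z ^ n :=
  (summable_norm_eulerCoeff_mul_pow hq z).of_norm

lemma eulerSeries_eq_one_sub_mul (hq : ‖q‖ < 1) (z : ℂ) :
    eulerSeries q z = (1 - z) * eulerSeries q (q * z) := by
  have hshift (n : ℕ) :
      eulerCoeff q (n + 1) * z ^ (n + 1) - eulerCoeff q (n + 1) * (q * z) ^ (n + 1)
        = -z * (eulerCoeff q n * (q * z) ^ n) := by
    rw [eulerCoeff_succ, div_eq_mul_inv]
    linear_combination (-(q ^ n * eulerCoeff q n * z ^ (n + 1))) *
      mul_inv_cancel₀ (one_sub_mul_pow_ne_zero hq n)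
  have hz := summable_eulerCoeff_mul_pow hq z
  have hqz := summable_eulerCoeff_mul_pow hq (q * z)
  have hdiff : eulerSeries q z - eulerSeries q (q * z) = -z * eulerSeries q (q * z) := by
    rw [eulerSeries, eulerSeries, ← hz.tsum_sub hqz, (hz.sub hqz).tsum_eq_zero_add]
    simp only [hshift, tsum_mul_left, pow_zero, sub_self, zero_add]
  linear_combination hdiff

lemma eulerSeries_zpow_eq_zero (hq : ‖q‖ < 1) (hq0 : q ≠ 0) {j : ℤ} (hj : j ≤ 0) :
    eulerSeries q (q ^ j) = 0 := by
  induction j, hj using Int.leInductionDown with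
  | base => simpa using eulerSeries_eq_one_sub_mul hq 1
  | pred j _ ih =>
    rw [eulerSeries_eq_one_sub_mul hq, zpow_sub_one₀ hq0, mul_comm (q ^ j), ← mul_assoc,
      mul_inv_cancel₀ hq0, one_mul, ih, mul_zero]

lemma eulerSeries_self_eq_qPoch_mul (hq : ‖q‖ < 1) (N : ℕ) :
    eulerSeries q q = qPoch q q N * eulerSeries q (q ^ (N + 1)) := by
  induction N with
  | zero => simp [qPoch]
  | succ N ih =>
    rw [ih, qPoch_succ, eulerSeries_eq_one_sub_mul hq (q ^ (N + 1)), ← pow_succ']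
    ring

lemma tendsto_eulerSeries_nhds_zero (hq : ‖q‖ < 1) :
    Tendsto (eulerSeries q) (𝓝 0) (𝓝 1) := by
  have hlim : ∑' n, eulerCoeff q n * (0 : ℂ) ^ n = 1 := by
    rw [tsum_eq_single 0 fun n hn => by simp [hn], pow_zero, mul_one, eulerCoeff_zero]
  rw [← hlim]
  refine tendsto_tsum_of_dominated_convergence (bound := fun n => ‖eulerCoeff q n‖)
    (by simpa using summable_norm_eulerCoeff_mul_pow hq 1)
    (fun n => ((continuous_pow n).tendsto 0).const_mul _) ?_
  filter_upwards [Metric.closedBall_mem_nhds (0 : ℂ) one_pos] with z hz n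
  rw [norm_mul, norm_pow]
  exact mul_le_of_le_one_right (norm_nonneg _)
    (pow_le_one₀ (norm_nonneg z) (by simpa using hz))

lemma eulerSeries_self_ne_zero (hq : ‖q‖ < 1) : eulerSeries q q ≠ 0 := by
  have hsmall : Tendsto (fun N : ℕ => eulerSeries q (q ^ (N + 1))) atTop (𝓝 1) :=
    (tendsto_eulerSeries_nhds_zero hq).comp
      ((tendsto_pow_atTop_nhds_zero_of_norm_lt_one hq).comp (tendsto_add_atTop_nat 1))
  obtain ⟨N, hN⟩ := (hsmall.eventually_ne one_ne_zero).exists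
  rw [eulerSeries_self_eq_qPoch_mul hq N]
  exact mul_ne_zero (qPoch_self_ne_zero hq N) hN

lemma tsum_eulerCoeff_mul_eulerSeries_comm (hq : ‖q‖ < 1) (z b : ℂ) :
    ∑' n, eulerCoeff q n * z ^ n * eulerSeries q (b * q ^ n)
      = ∑' n, eulerCoeff q n * b ^ n * eulerSeries q (z * q ^ n) := by
  set F : ℕ → ℕ → ℂ := fun n k =>
    eulerCoeff q n * z ^ n * (eulerCoeff q k * b ^ k) * q ^ (n * k)
  have hF : Summable (Function.uncurry F) := by
    refine ((summable_norm_eulerCoeff_mul_pow hq z).mul_norm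
      (summable_norm_eulerCoeff_mul_pow hq b)).of_norm_bounded fun p => ?_
    rw [Function.uncurry, norm_mul, norm_pow]
    exact mul_le_of_le_one_right (norm_nonneg _) (pow_le_one₀ (norm_nonneg q) hq.le)
  have hrow (n : ℕ) : eulerCoeff q n * z ^ n * eulerSeries q (b * q ^ n) = ∑' k, F n k := by
    simp only [F, eulerSeries, ← tsum_mul_left, mul_pow, ← pow_mul]
    exact tsum_congr fun k => by ring
  have hcol (n : ℕ) : eulerCoeff q n * b ^ n * eulerSeries q (z * q ^ n) = ∑' k, F k n := by
    simp only [F, eulerSeries, ← tsum_mul_left, mul_pow, ← pow_mul]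
    exact tsum_congr fun k => by ring
  simp only [hrow, hcol]
  exact (hF.tsum_comm' hF.prod_factor fun k => hF.prod_symm.prod_factor k).symm

end Euler

section TetrahedralIndex

variable {u : ℂ}

lemma norm_sq_lt_one (hu1 : ‖u‖ < 1) : ‖u ^ 2‖ < 1 := by
  rw [norm_pow]
  exact pow_lt_one₀ (norm_nonneg u) hu1 two_ne_zero

lemma zpow_tetTerm_exponent (hu : u ≠ 0) (m e : ℤ) (n : ℕ) :
    u ^ ((n : ℤ) * ((n : ℤ) + 1) - (2 * (n : ℤ) + e) * m)
      = u ^ (-(e * m)) * (u ^ 2) ^ n.choose 2 * ((u ^ 2) ^ (1 - m)) ^ n := by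
  rw [← zpow_ofNat u 2, ← zpow_natCast (u ^ (2 : ℤ)) (n.choose 2), ← zpow_mul, ← zpow_mul,
    ← zpow_natCast _ n, ← zpow_mul, ← zpow_add₀ hu, ← zpow_add₀ hu]
  congr 1
  linear_combination -Nat.two_mul_choose_two_eq n

lemma eulerSeries_mul_tetTerm (hu : u ≠ 0) (hu1 : ‖u‖ < 1) (m e : ℤ) (n : ℕ) :
    eulerSeries (u ^ 2) (u ^ 2) * tetTerm u m e n
      = u ^ (-(e * m)) * (eulerCoeff (u ^ 2) n * ((u ^ 2) ^ (1 - m)) ^ n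
          * eulerSeries (u ^ 2) ((u ^ 2) ^ (1 + e) * (u ^ 2) ^ n)) := by
  have hq := norm_sq_lt_one hu1
  have hq0 : u ^ 2 ≠ 0 := pow_ne_zero 2 hu
  rw [← zpow_natCast (u ^ 2) n, ← zpow_add₀ hq0]
  by_cases hn : (-e).toNat ≤ n
  · obtain ⟨N, hN⟩ : ∃ N : ℕ, (n : ℤ) + e = N := ⟨((n : ℤ) + e).toNat, by omega⟩
    have hexp : 1 + e + n = ((N + 1 : ℕ) : ℤ) := by push_cast; omega
    rw [tetTerm, if_pos hn, hN, Int.toNat_natCast, hexp, zpow_natCast,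
      eulerSeries_self_eq_qPoch_mul hq N, zpow_tetTerm_exponent hu, eulerCoeff]
    field_simp [qPoch_self_ne_zero hq n, qPoch_self_ne_zero hq N]
  · rw [tetTerm, if_neg hn, eulerSeries_zpow_eq_zero hq hq0 (by omega), mul_zero, mul_zero,
      mul_zero]

lemma eulerSeries_mul_tetIndex (hu : u ≠ 0) (hu1 : ‖u‖ < 1) (m e : ℤ) :
    eulerSeries (u ^ 2) (u ^ 2) * tetIndex u m e
      = u ^ (-(e * m)) * ∑' n, eulerCoeff (u ^ 2) n * ((u ^ 2) ^ (1 - m)) ^ n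
          * eulerSeries (u ^ 2) ((u ^ 2) ^ (1 + e) * (u ^ 2) ^ n) := by
  rw [tetIndex, ← tsum_mul_left, ← tsum_mul_left]
  exact tsum_congr (eulerSeries_mul_tetTerm hu hu1 m e)

end TetrahedralIndex

/-- `I_Δ(m,e) = I_Δ(-e,-m)`. -/
theorem stmt_2 (u : ℂ) (hu0 : 0 < ‖u‖) (hu1 : ‖u‖ < 1) (m e : ℤ) :
    tetIndex u m e = tetIndex u (-e) (-m) := by
  have hu : u ≠ 0 := norm_pos_iff.1 hu0
  have hq := norm_sq_lt_one hu1
  refine mul_left_cancel₀ (eulerSeries_self_ne_zero hq) ?_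
  rw [eulerSeries_mul_tetIndex hu hu1, eulerSeries_mul_tetIndex hu hu1,
    tsum_eulerCoeff_mul_eulerSeries_comm hq, sub_neg_eq_add, ← sub_eq_add_neg, neg_mul_neg,
    mul_comm m e]
end

section
/- For all integers m and e, the tetrahedral index satisfies u^{e} · I_Δ(m+1, e) + u^{-m} · I_Δ(m, e+1) - I_Δ(m,e) = 0, where u plays the role of q^{1/2} (so u^{e} = q^{e/2} and u^{-m} = q^{-m/2}). -/
open scoped BigOperators

/-! Writing `T m e n` for the `n`-th summand of `I_Δ(m,e)`, the summands of `I_Δ(m,e)` and of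
`u^e I_Δ(m+1,e)` differ only by the factor `q^{n}` in the numerator, and
`(1 - q^{n+1}) / (q;q)_{n+1} = 1 / (q;q)_n`. Hence `T m e (n+1) - u^e T (m+1) e (n+1)` is
`u^{-m} T m (e+1) n` and the `n = 0` terms agree, so the identity follows by shifting the index
of a convergent series. Convergence comes from the uniform bound
`|(q;q)_n| ≥ exp(-(1-|q|)^{-2})` together with the quadratic exponent of `u`. -/

theorem summable_pow_sq_mul_pow {x : ℝ} (hx0 : 0 ≤ x) (hx1 : x < 1) (y : ℝ) :
    Summable fun n : ℕ => x ^ (n ^ 2) * y ^ n := by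
  have hsmall : ∀ᶠ n : ℕ in Filter.atTop, ‖x ^ n * y‖ ≤ 2⁻¹ := by
    have h := (tendsto_pow_atTop_nhds_zero_of_lt_one hx0 hx1).mul_const y
    rw [zero_mul] at h
    exact h.norm.eventually (ge_mem_nhds (by norm_num))
  refine Summable.of_norm_bounded_eventually_nat
    (summable_geometric_of_lt_one (by norm_num) (by norm_num : (2⁻¹ : ℝ) < 1)) ?_
  filter_upwards [hsmall] with n hn
  calc ‖x ^ (n ^ 2) * y ^ n‖ = ‖x ^ n * y‖ ^ n := by
        rw [← norm_pow, mul_pow, ← pow_mul, sq]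
    _ ≤ 2⁻¹ ^ n := pow_le_pow_left₀ (norm_nonneg _) hn n

theorem summable_zpow_quadratic {r : ℝ} (hr0 : 0 < r) (hr1 : r < 1) (a b : ℤ) :
    Summable fun n : ℕ => r ^ ((n : ℤ) ^ 2 + a * n + b) := by
  refine ((summable_pow_sq_mul_pow hr0.le hr1 (r ^ a)).mul_left (r ^ b)).congr fun n => ?_
  rw [zpow_add₀ hr0.ne', zpow_add₀ hr0.ne', zpow_mul, zpow_natCast,
    ← zpow_natCast, Nat.cast_pow]
  ring

theorem qPoch_self_succ (q : ℂ) (n : ℕ) :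
    qPoch q q (n + 1) = qPoch q q n * (1 - q ^ (n + 1)) := by
  rw [qPoch, qPoch, Finset.prod_range_succ, ← pow_succ']

theorem exp_neg_le_one_sub_pow_succ {x : ℝ} (hx0 : 0 ≤ x) (hx1 : x < 1) (i : ℕ) :
    Real.exp (-(x ^ i / (1 - x))) ≤ 1 - x ^ (i + 1) := by
  have hxi : x ^ (i + 1) ≤ x ^ i := pow_le_pow_of_le_one hx0 hx1.le (Nat.le_succ i)
  have hx : x ^ (i + 1) ≤ x := pow_le_of_le_one hx0 hx1.le (Nat.succ_ne_zero i)
  have hpos : 0 < 1 - x ^ (i + 1) := by linarith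
  rw [← Real.le_log_iff_exp_le hpos]
  refine le_trans ?_ (Real.one_sub_inv_le_log_of_pos hpos)
  have hsub : 1 - (1 - x ^ (i + 1))⁻¹ = -(x ^ (i + 1) / (1 - x ^ (i + 1))) := by
    field_simp; ring
  rw [hsub, neg_le_neg_iff]
  exact div_le_div₀ (pow_nonneg hx0 i) hxi (by linarith) (by linarith)

theorem exp_neg_le_norm_qPoch {q : ℂ} (hq : ‖q‖ < 1) (n : ℕ) :
    Real.exp (-(1 - ‖q‖)⁻¹ ^ 2) ≤ ‖qPoch q q n‖ := by
  set x := ‖q‖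
  have hx0 : 0 ≤ x := norm_nonneg q
  have hgeom : ∑ i ∈ Finset.range n, x ^ i / (1 - x) ≤ (1 - x)⁻¹ ^ 2 := by
    rw [← Finset.sum_div, Finset.range_eq_Ico, div_eq_mul_inv, sq]
    gcongr
    simpa using geom_sum_Ico_le_of_lt_one (m := 0) (n := n) hx0 hq
  calc Real.exp (-(1 - x)⁻¹ ^ 2)
      ≤ Real.exp (∑ i ∈ Finset.range n, -(x ^ i / (1 - x))) := by
        rw [Finset.sum_neg_distrib]; exact Real.exp_le_exp.2 (neg_le_neg hgeom)
    _ = ∏ i ∈ Finset.range n, Real.exp (-(x ^ i / (1 - x))) := Real.exp_sum _ _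
    _ ≤ ∏ i ∈ Finset.range n, (1 - x ^ (i + 1)) :=
        Finset.prod_le_prod (fun i _ => (Real.exp_pos _).le)
          fun i _ => exp_neg_le_one_sub_pow_succ hx0 hq i
    _ ≤ ∏ i ∈ Finset.range n, ‖1 - q * q ^ i‖ := by
        refine Finset.prod_le_prod (fun i _ => ?_) fun i _ => ?_
        · have := pow_le_one₀ hx0 hq.le (n := i + 1); linarith
        · simpa [x, ← pow_succ'] using norm_sub_norm_le (1 : ℂ) (q ^ (i + 1))
    _ = ‖qPoch q q n‖ := by rw [qPoch, norm_prod]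

theorem qPoch_ne_zero {q : ℂ} (hq : ‖q‖ < 1) (n : ℕ) : qPoch q q n ≠ 0 :=
  norm_pos_iff.1 ((Real.exp_pos _).trans_le (exp_neg_le_norm_qPoch hq n))

theorem norm_inv_qPoch_le {q : ℂ} (hq : ‖q‖ < 1) (n : ℕ) :
    ‖(qPoch q q n)⁻¹‖ ≤ Real.exp ((1 - ‖q‖)⁻¹ ^ 2) := by
  rw [norm_inv]
  refine inv_le_of_inv_le₀ (Real.exp_pos _) ?_
  rw [← Real.exp_neg]
  exact exp_neg_le_norm_qPoch hq n

theorem norm_tetTerm_le {u : ℂ} (hu1 : ‖u‖ < 1) (m e : ℤ) (n : ℕ) :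
    ‖tetTerm u m e n‖ ≤
      Real.exp ((1 - ‖u ^ 2‖)⁻¹ ^ 2) ^ 2 *
        ‖u‖ ^ ((n : ℤ) ^ 2 + (1 - 2 * m) * n + -(e * m)) := by
  have hq : ‖u ^ 2‖ < 1 := by rw [norm_pow]; exact pow_lt_one₀ (norm_nonneg u) hu1 two_ne_zero
  unfold tetTerm
  split_ifs
  · rw [div_eq_mul_inv, mul_inv, norm_mul, norm_mul, norm_mul, norm_pow, norm_neg, norm_one,
      one_pow, one_mul, norm_zpow, sq (Real.exp _), mul_comm]
    have hE : (n : ℤ) * (n + 1) - (2 * n + e) * m =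
        (n : ℤ) ^ 2 + (1 - 2 * m) * n + -(e * m) := by ring
    rw [hE]
    gcongr
    · exact norm_inv_qPoch_le hq _
    · exact norm_inv_qPoch_le hq _
  · rw [norm_zero]; positivity

theorem summable_tetTerm {u : ℂ} (hu0 : 0 < ‖u‖) (hu1 : ‖u‖ < 1) (m e : ℤ) :
    Summable (tetTerm u m e) :=
  .of_norm_bounded ((summable_zpow_quadratic hu0 hu1 _ _).mul_left _) (norm_tetTerm_le hu1 m e)

theorem tetTerm_zero_eq {u : ℂ} (hu : u ≠ 0) (m e : ℤ) :
    u ^ e * tetTerm u (m + 1) e 0 = tetTerm u m e 0 := by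
  simp only [tetTerm]
  split_ifs
  · rw [mul_div_assoc', ← mul_assoc, mul_comm (u ^ e), mul_assoc, ← zpow_add₀ hu]
    congr 3; push_cast; ring
  · rw [mul_zero]

theorem tetTerm_succ_sub {u : ℂ} (hu : u ≠ 0) (m e : ℤ) {n : ℕ}
    (hq : qPoch (u ^ 2) (u ^ 2) (n + 1) ≠ 0) :
    tetTerm u m e (n + 1) - u ^ e * tetTerm u (m + 1) e (n + 1) =
      u ^ (-m) * tetTerm u m (e + 1) n := by
  have hcond : (-e).toNat ≤ n + 1 ↔ (-(e + 1)).toNat ≤ n := by omega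
  simp only [tetTerm, hcond]
  split_ifs with h
  · have hidx : (((n + 1 : ℕ) : ℤ) + e).toNat = ((n : ℤ) + (e + 1)).toNat := by
      push_cast; ring_nf
    set w := u ^ ((n : ℤ) * (n + 1) - (2 * n + e + 2) * m)
    have h1 : u ^ (((n + 1 : ℕ) : ℤ) * (((n + 1 : ℕ) : ℤ) + 1) -
        (2 * ((n + 1 : ℕ) : ℤ) + e) * m) = w * (u ^ 2) ^ (n + 1) := by
      rw [← pow_mul, ← zpow_natCast, ← zpow_add₀ hu]; congr 1; push_cast; ring
    have h2 : u ^ e * u ^ (((n + 1 : ℕ) : ℤ) * (((n + 1 : ℕ) : ℤ) + 1) -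
        (2 * ((n + 1 : ℕ) : ℤ) + e) * (m + 1)) = w := by
      rw [← zpow_add₀ hu]; congr 1; push_cast; ring
    have h3 : u ^ (-m) * u ^ ((n : ℤ) * (n + 1) - (2 * n + (e + 1)) * m) = w := by
      rw [← zpow_add₀ hu]; congr 1; ring
    rw [hidx, h1, mul_div_assoc', mul_div_assoc', mul_left_comm (u ^ e), h2,
      mul_left_comm (u ^ (-m)), h3, qPoch_self_succ]
    rw [qPoch_self_succ, mul_ne_zero_iff] at hq
    field_simp [hq.1, hq.2]
    ring
  · simp

/-- `q^{e/2} I_Δ(m+1,e) + q^{-m/2} I_Δ(m,e+1) - I_Δ(m,e) = 0`, `u = q^{1/2}`. -/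
theorem stmt_7 (u : ℂ) (hu0 : 0 < ‖u‖) (hu1 : ‖u‖ < 1) (m e : ℤ) :
    u ^ e * tetIndex u (m + 1) e + u ^ (-m) * tetIndex u m (e + 1) - tetIndex u m e = 0 := by
  have hu : u ≠ 0 := norm_pos_iff.1 hu0
  have hq : ‖u ^ 2‖ < 1 := by rw [norm_pow]; exact pow_lt_one₀ (norm_nonneg u) hu1 two_ne_zero
  have hsum := summable_tetTerm hu0 hu1
  have hdiff : Summable fun n => tetTerm u m e n - u ^ e * tetTerm u (m + 1) e n :=
    (hsum m e).sub ((hsum (m + 1) e).mul_left _)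
  have key : tetIndex u m e - u ^ e * tetIndex u (m + 1) e = u ^ (-m) * tetIndex u m (e + 1) :=
    calc tetIndex u m e - u ^ e * tetIndex u (m + 1) e
        = ∑' n, (tetTerm u m e n - u ^ e * tetTerm u (m + 1) e n) := by
          rw [tetIndex, tetIndex, ← tsum_mul_left,
            (hsum m e).tsum_sub ((hsum (m + 1) e).mul_left _)]
      _ = ∑' n, (tetTerm u m e (n + 1) - u ^ e * tetTerm u (m + 1) e (n + 1)) := by
          rw [hdiff.tsum_eq_zero_add, tetTerm_zero_eq hu, sub_self, zero_add]
      _ = u ^ (-m) * tetIndex u m (e + 1) := by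
          simp_rw [tetTerm_succ_sub hu m e (qPoch_ne_zero hq _)]
          rw [tsum_mul_left, tetIndex]
  linear_combination -key
end
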